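/- arXiv:1609.00765 — 5 statements merged into one kernel-verified Lean document; each statement's English description precedes it below -/
import Mathlib

section
/- Let U be a real Hilbert space, K ⊆ U closed convex nonempty, a : U × U → ℝ bilinear, bounded with constant M and coercive with constant α > 0 (α‖u‖² ≤ a(u,u)), and F a bounded linear functional. Let u ∈ K solve the variational inequality a(u, v−u) ≥ F(v−u) for all v ∈ K, and let Kₕ ⊆ K be a closed convex nonempty subset with discrete solution uₕ ∈ Kₕ satisfying a(uₕ, vₕ−uₕ) ≥ F(vₕ−uₕ) for all vₕ ∈ Kₕ. Then for every vₕ ∈ Kₕ, α‖u−uₕ‖² ≤ M‖u−uₕ‖·‖u−vₕ‖ + a(u−uₕ, vₕ−uₕ). -/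
open scoped InnerProductSpace RealInnerProductSpace

/-- Key intermediate inequality in Falk's lemma: for a bounded (constant `M`)
and coercive (constant `α > 0`) bilinear form, continuous solution `u ∈ K` and
discrete solution `uₕ ∈ Kₕ ⊆ K` of the respective variational inequalities
satisfy `α‖u−uₕ‖² ≤ M‖u−uₕ‖‖u−vₕ‖ + a(u−uₕ, vₕ−uₕ)` for every `vₕ ∈ Kₕ`. -/
theorem falk_intermediate
    {U : Type*} [NormedAddCommGroup U] [InnerProductSpace ℝ U] [CompleteSpace U]
    (a : U →ₗ[ℝ] U →ₗ[ℝ] ℝ) (α M : ℝ) (hα : 0 < α)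
    (hbdd : ∀ u v : U, |a u v| ≤ M * ‖u‖ * ‖v‖)
    (hcoer : ∀ u : U, α * ‖u‖ ^ 2 ≤ a u u)
    (F : U →L[ℝ] ℝ)
    (K Kh : Set U)
    (hKne : K.Nonempty) (hKcl : IsClosed K) (hKcv : Convex ℝ K)
    (hKhne : Kh.Nonempty) (hKhcl : IsClosed Kh) (hKhcv : Convex ℝ Kh)
    (hsub : Kh ⊆ K)
    (u uh : U) (hu : u ∈ K) (huh : uh ∈ Kh)
    (hVI : ∀ v ∈ K, F (v - u) ≤ a u (v - u))
    (hVIh : ∀ vh ∈ Kh, F (vh - uh) ≤ a uh (vh - uh)) :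
    ∀ vh ∈ Kh,
      α * ‖u - uh‖ ^ 2 ≤ M * ‖u - uh‖ * ‖u - vh‖ + a (u - uh) (vh - uh) := by
  intro vh hvh
  have h1 : a (u - uh) (u - uh) = a (u - uh) (u - vh) + a (u - uh) (vh - uh) := by
    rw [← map_add]
    congr 1
    abel
  calc α * ‖u - uh‖ ^ 2 ≤ a (u - uh) (u - uh) := hcoer _
    _ = a (u - uh) (u - vh) + a (u - uh) (vh - uh) := h1
    _ ≤ M * ‖u - uh‖ * ‖u - vh‖ + a (u - uh) (vh - uh) := by
        have := (abs_le.mp (hbdd (u - uh) (u - vh))).2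
        linarith
end

section
/- Let U, V be real Hilbert spaces, B : U → V' bounded linear, E : H → U bounded linear (H a Hilbert space), γ₀ : U → H bounded linear with γ₀ ∘ E = id_H, ran(E) = ker(B), and suppose there is a constant c > 0 with ‖u − E γ₀ u‖_U ≤ c ‖Bu‖_{V'} for all u ∈ U. Suppose further γ_n : U → H' is bounded and there is C with ‖γ_n(u − Eγ₀u)‖_{H'} ≤ C‖Bu‖_{V'}, and ‖γ₀u‖_H² = ⟨γ_n E γ₀ u, γ₀ u⟩ for all u ∈ U. Then the bilinear form a(u,w) := β⟨Bu, Bw⟩_{V'} (inner product via Riesz) + ⟨γ_n u, γ₀ w⟩ is coercive on U for β ≥ 1 + C²/2: there exists C₁ > 0 (depending only on c, C) with ‖u‖_U² ≤ C₁ a(u,u). -/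
open scoped InnerProductSpace

/-- Abstract coercivity (Theorem 2.1): let `B : U → V` be the DPG operator
(composed with the Riesz isomorphism `V' ≅ V`, so that `⟨Bu,Bw⟩_{V'}` is the
inner product `⟪Bu, Bw⟫_V` and `‖Bu‖_{V'} = ‖Bu‖_V`), `E` the extension
operator with `γ₀∘E = id` and `ran E = ker B`, `γ₀, γ_n` the trace operators.
Assuming the quotient stability `‖u − Eγ₀u‖ ≤ c‖Bu‖`, the Neumann-trace bound
`‖γ_n(u − Eγ₀u)‖ ≤ C‖Bu‖`, and the Dirichlet-to-Neumann identity
`‖γ₀u‖² = ⟨γ_n Eγ₀u, γ₀u⟩`, the bilinear form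
`a(u,w) = β⟨Bu,Bw⟩ + ⟨γ_n u, γ₀ w⟩` is coercive for every `β ≥ 1 + C²/2`. -/
theorem abstract_dpg_coercivity
    {U V H : Type*}
    [NormedAddCommGroup U] [InnerProductSpace ℝ U]
    [NormedAddCommGroup V] [InnerProductSpace ℝ V]
    [NormedAddCommGroup H] [InnerProductSpace ℝ H]
    (B : U →L[ℝ] V) (E : H →L[ℝ] U) (γ₀ : U →L[ℝ] H)
    (γn : U →L[ℝ] (H →L[ℝ] ℝ))
    (hE : ∀ h : H, γ₀ (E h) = h)
    (hker : ∀ u : U, B u = 0 ↔ ∃ h : H, E h = u)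
    (c : ℝ) (hc : 0 < c)
    (hquot : ∀ u : U, ‖u - E (γ₀ u)‖ ≤ c * ‖B u‖)
    (C : ℝ)
    (hγn : ∀ u : U, ‖γn (u - E (γ₀ u))‖ ≤ C * ‖B u‖)
    (hDtN : ∀ u : U, ‖γ₀ u‖ ^ 2 = γn (E (γ₀ u)) (γ₀ u))
    (β : ℝ) (hβ : 1 + C ^ 2 / 2 ≤ β) :
    ∃ C₁ > 0, ∀ u : U,
      ‖u‖ ^ 2 ≤ C₁ * (β * ⟪B u, B u⟫_ℝ + γn u (γ₀ u)) := by
  refine ⟨2 * c ^ 2 + 4 * ‖E‖ ^ 2 + 1, by positivity, fun u => ?_⟩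
  set b := ‖B u‖ with hb
  set g := ‖γ₀ u‖ with hg
  have hb0 : 0 ≤ b := norm_nonneg _
  have hg0 : 0 ≤ g := norm_nonneg _
  have hN0 : (0:ℝ) ≤ ‖E‖ := norm_nonneg _
  have hBB : ⟪B u, B u⟫_ℝ = b ^ 2 := by
    rw [real_inner_self_eq_norm_sq]
  have hsplit : γn u (γ₀ u) = γn (u - E (γ₀ u)) (γ₀ u) + g ^ 2 := by
    rw [hDtN u, map_sub]
    simp
  have habs : |γn (u - E (γ₀ u)) (γ₀ u)| ≤ C * b * g := by
    calc |γn (u - E (γ₀ u)) (γ₀ u)| ≤ ‖γn (u - E (γ₀ u))‖ * g := by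
          simpa using (γn (u - E (γ₀ u))).le_opNorm (γ₀ u)
      _ ≤ C * b * g := mul_le_mul_of_nonneg_right (hγn u) hg0
  have hlow : -(C * b * g) ≤ γn (u - E (γ₀ u)) (γ₀ u) := neg_le_of_abs_le habs
  have hnorm : ‖u‖ ≤ c * b + ‖E‖ * g := by
    have h1 : u = (u - E (γ₀ u)) + E (γ₀ u) := by abel
    calc ‖u‖ = ‖(u - E (γ₀ u)) + E (γ₀ u)‖ := by rw [← h1]
      _ ≤ ‖u - E (γ₀ u)‖ + ‖E (γ₀ u)‖ := norm_add_le _ _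
      _ ≤ c * b + ‖E‖ * g := add_le_add (hquot u) (E.le_opNorm _)
  have hβb : (1 + C ^ 2 / 2) * b ^ 2 ≤ β * b ^ 2 :=
    mul_le_mul_of_nonneg_right hβ (sq_nonneg b)
  rw [hBB, hsplit]
  nlinarith [sq_nonneg (C * b - g), sq_nonneg (c * b - ‖E‖ * g), norm_nonneg u,
    mul_nonneg (mul_nonneg hb0 hg0) hN0, sq_nonneg b, sq_nonneg g,
    mul_nonneg hb0 hg0, mul_nonneg (mul_nonneg hc.le hb0) (mul_nonneg hN0 hg0)]
end

section
/- Let Ω ⊆ ℝᵈ be a bounded Lipschitz domain, 0 < ε ≤ 1, and ŵ ∈ H^{1/2}(Γ). The system div λ + ε^{−1/2} w = 0, λ + ∇w = 0 in Ω with w|_Γ = ŵ admits a unique solution (w, λ) ∈ H¹(Ω) × H(div, Ω), and ‖λ‖² + ε^{1/2}‖div λ‖² = ‖∇w‖² + ε^{−1/2}‖w‖² ≤ ε^{−1} ‖ŵ‖²_{H^{1/2}(Γ)}, where ‖ŵ‖²_{H^{1/2}(Γ)} := inf{‖u‖² + ε‖∇u‖² : u ∈ H¹(Ω), u|_Γ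 = ŵ}. -/
/-!
Eliminating `λ = -∇w` turns the system into the weak problem
`⟪∇w, ∇v⟫ + ε^{-1/2} ⟪w, v⟫ = 0` for all `v` with `tr v = 0`: `w` is the minimiser of the
weighted Dirichlet energy `‖∇u‖² + ε^{-1/2}‖u‖²` among all `u` with `tr u = ŵ`. Lax–Milgram
on `ker tr` gives existence, coercivity gives uniqueness, and the characterisation of
`H(div)` through Green's formula recovers `λ`. The energy identity is `λ = -∇w`,
`div λ = -ε^{-1/2} w`; for the bound, minimality gives for every extension `u`
`ε (‖∇w‖² + ε^{-1/2}‖w‖²) ≤ ε‖∇u‖² + ε^{1/2}‖u‖² ≤ ‖u‖² + ε‖∇u‖²`, using `ε ≤ 1`.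
-/

open scoped InnerProductSpace

theorem IsCoercive.restrict {E : Type*} [NormedAddCommGroup E] [NormedSpace ℝ E]
    {B : E →L[ℝ] E →L[ℝ] ℝ} (hB : IsCoercive B) (K : Submodule ℝ E) :
    IsCoercive (B.bilinearComp K.subtypeL K.subtypeL) := by
  obtain ⟨C, hC, hBC⟩ := hB
  exact ⟨C, hC, fun u => hBC u⟩

/-- Lax–Milgram on `ker T`, applied to the functional `-B u₀`. -/
theorem IsCoercive.exists_map_eq_forall_ker {E F : Type*} [NormedAddCommGroup E]
    [InnerProductSpace ℝ E] [CompleteSpace E] [NormedAddCommGroup F] [NormedSpace ℝ F]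
    {B : E →L[ℝ] E →L[ℝ] ℝ} (hB : IsCoercive B) (T : E →L[ℝ] F) (u₀ : E) :
    ∃ u, T u = T u₀ ∧ ∀ v, T v = 0 → B u v = 0 := by
  set K : Submodule ℝ E := LinearMap.ker (T : E →ₗ[ℝ] F)
  have hK := hB.restrict K
  set w : K := hK.continuousLinearEquivOfBilin.symm
    ((InnerProductSpace.toDual ℝ K).symm (-(B u₀).comp K.subtypeL))
  have hw : ∀ v : K, B w v = -B u₀ v := fun v => by
    simpa [w] using (hK.continuousLinearEquivOfBilin_apply w v).symm
  refine ⟨u₀ + w, by simp, fun v hv => ?_⟩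
  simp [hw ⟨v, hv⟩]

theorem IsCoercive.eq_of_forall_ker {E F : Type*} [NormedAddCommGroup E] [NormedSpace ℝ E]
    [NormedAddCommGroup F] [NormedSpace ℝ F] {B : E →L[ℝ] E →L[ℝ] ℝ} (hB : IsCoercive B)
    {T : E →L[ℝ] F} {u u' : E} (hu : ∀ v, T v = 0 → B u v = 0)
    (hu' : ∀ v, T v = 0 → B u' v = 0) (hT : T u = T u') : u = u' := by
  obtain ⟨C, hC, hBC⟩ := hB
  have hker : T (u - u') = 0 := by rw [map_sub, hT, sub_self]
  have hzero : B (u - u') (u - u') = 0 := by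
    rw [map_sub B, sub_apply, hu _ hker, hu' _ hker, sub_self]
  have hcoer := hBC (u - u')
  rw [hzero, mul_assoc] at hcoer
  have hsq : ‖u - u'‖ * ‖u - u'‖ = 0 :=
    le_antisymm (nonpos_of_mul_nonpos_right hcoer hC) (mul_self_nonneg _)
  exact sub_eq_zero.mp (norm_eq_zero.mp (mul_self_eq_zero.mp hsq))

section WeightedDirichletForm

variable {H L2 L2d : Type*} [NormedAddCommGroup H] [NormedSpace ℝ H]
  [NormedAddCommGroup L2] [InnerProductSpace ℝ L2]
  [NormedAddCommGroup L2d] [InnerProductSpace ℝ L2d]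
  (ι : H →L[ℝ] L2) (grad : H →L[ℝ] L2d) (c : ℝ)

noncomputable def weightedDirichletForm : H →L[ℝ] H →L[ℝ] ℝ :=
  (innerSL ℝ).bilinearComp grad grad + c • (innerSL ℝ).bilinearComp ι ι

variable {ι grad c}

theorem weightedDirichletForm_apply (u v : H) :
    weightedDirichletForm ι grad c u v = ⟪grad u, grad v⟫_ℝ + c * ⟪ι u, ι v⟫_ℝ :=
  rfl

theorem weightedDirichletForm_self (u : H) :
    weightedDirichletForm ι grad c u u = ‖grad u‖ ^ 2 + c * ‖ι u‖ ^ 2 := by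
  simp only [weightedDirichletForm_apply, real_inner_self_eq_norm_sq]

theorem isCoercive_weightedDirichletForm (hc : 0 < c)
    (hnorm : ∀ u : H, ‖u‖ ^ 2 = ‖ι u‖ ^ 2 + ‖grad u‖ ^ 2) :
    IsCoercive (weightedDirichletForm ι grad c) := by
  refine ⟨min 1 c, lt_min one_pos hc, fun u => ?_⟩
  rw [weightedDirichletForm_self, mul_assoc, ← sq, hnorm]
  nlinarith [min_le_left 1 c, min_le_right 1 c, sq_nonneg ‖ι u‖, sq_nonneg ‖grad u‖]

theorem weightedDirichletForm_self_le_of_apply_eq_zero (hc : 0 ≤ c) {u d : H}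
    (h : weightedDirichletForm ι grad c u d = 0) :
    weightedDirichletForm ι grad c u u ≤ weightedDirichletForm ι grad c (u + d) (u + d) := by
  have hsymm : weightedDirichletForm ι grad c d u = 0 := by
    simpa only [weightedDirichletForm_apply, real_inner_comm] using h
  have hdd : 0 ≤ weightedDirichletForm ι grad c d d := by
    rw [weightedDirichletForm_self]; positivity
  simp only [map_add, add_apply, h, hsymm]
  linarith

end WeightedDirichletForm

section FirstOrderSystem

variable {H L2 L2d Htr : Type*} [NormedAddCommGroup H] [NormedSpace ℝ H]
  [NormedAddCommGroup L2] [InnerProductSpace ℝ L2]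
  [NormedAddCommGroup L2d] [InnerProductSpace ℝ L2d]
  [NormedAddCommGroup Htr] [NormedSpace ℝ Htr]
  {ι : H →L[ℝ] L2} {grad : H →L[ℝ] L2d} {c : ℝ}

theorem weightedDirichletForm_apply_eq_neg {w v : H} {σ : L2d} {g : L2}
    (hσ : σ + grad w = 0) (hg : g + c • ι w = 0) :
    weightedDirichletForm ι grad c w v = -(⟪σ, grad v⟫_ℝ + ⟪g, ι v⟫_ℝ) := by
  rw [eq_neg_of_add_eq_zero_left hσ, eq_neg_of_add_eq_zero_left hg, inner_neg_left,
    inner_neg_left, real_inner_smul_left, weightedDirichletForm_apply]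
  ring

theorem weightedDirichletForm_self_le_inv_mul_sInf {ε : ℝ} (hε : 0 < ε) (hε1 : ε ≤ 1)
    {tr : H →L[ℝ] Htr} {w : H}
    (horth : ∀ v, tr v = 0 → weightedDirichletForm ι grad (ε ^ (-(1:ℝ)/2)) w v = 0) :
    weightedDirichletForm ι grad (ε ^ (-(1:ℝ)/2)) w w
      ≤ ε⁻¹ * sInf {r : ℝ | ∃ u : H, tr u = tr w ∧ r = ‖ι u‖ ^ 2 + ε * ‖grad u‖ ^ 2} := by
  have hc : 0 ≤ ε ^ (-(1:ℝ)/2) := Real.rpow_nonneg hε.le _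
  have hεc : ε * ε ^ (-(1:ℝ)/2) ≤ 1 := by
    rw [← Real.rpow_one_add' hε.le (by norm_num)]
    exact Real.rpow_le_one hε.le hε1 (by norm_num)
  rw [le_inv_mul_iff₀ hε]
  refine le_csInf ⟨_, w, rfl, rfl⟩ ?_
  rintro _ ⟨u, hu, rfl⟩
  have hker : tr (u - w) = 0 := by rw [map_sub, hu, sub_self]
  calc ε * weightedDirichletForm ι grad (ε ^ (-(1:ℝ)/2)) w w
      ≤ ε * weightedDirichletForm ι grad (ε ^ (-(1:ℝ)/2)) u u := by
        gcongr
        simpa using weightedDirichletForm_self_le_of_apply_eq_zero hc (horth _ hker)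
    _ = ε * ‖grad u‖ ^ 2 + ε * ε ^ (-(1:ℝ)/2) * ‖ι u‖ ^ 2 := by
        rw [weightedDirichletForm_self]; ring
    _ ≤ ‖ι u‖ ^ 2 + ε * ‖grad u‖ ^ 2 := by
        nlinarith [mul_le_mul_of_nonneg_right hεc (sq_nonneg ‖ι u‖)]

end FirstOrderSystem

theorem rpow_half_mul_norm_sq_eq_of_add_smul_eq_zero {E : Type*} [NormedAddCommGroup E]
    [NormedSpace ℝ E] {ε : ℝ} (hε : 0 < ε) {f g : E} (h : g + ε ^ (-(1:ℝ)/2) • f = 0) :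
    ε ^ ((1:ℝ)/2) * ‖g‖ ^ 2 = ε ^ (-(1:ℝ)/2) * ‖f‖ ^ 2 := by
  have hinv : ε ^ ((1:ℝ)/2) * ε ^ (-(1:ℝ)/2) = 1 := by
    rw [← Real.rpow_add hε]; norm_num
  rw [eq_neg_of_add_eq_zero_left h, norm_neg, norm_smul, Real.norm_of_nonneg (by positivity)]
  linear_combination ε ^ (-(1:ℝ)/2) * ‖f‖ ^ 2 * hinv

theorem sp_adjoint_problem_stability_general
    {H1 HD L2 L2d Htr : Type*}
    [NormedAddCommGroup H1] [InnerProductSpace ℝ H1] [CompleteSpace H1]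
    [AddCommGroup HD] [Module ℝ HD]
    [NormedAddCommGroup L2] [InnerProductSpace ℝ L2]
    [NormedAddCommGroup L2d] [InnerProductSpace ℝ L2d]
    [NormedAddCommGroup Htr] [NormedSpace ℝ Htr]
    (ε : ℝ) (hε : 0 < ε) (hε1 : ε ≤ 1)
    (ι : H1 →L[ℝ] L2) (grad : H1 →L[ℝ] L2d) (tr : H1 →L[ℝ] Htr)
    (toL2d : HD →ₗ[ℝ] L2d) (dvg : HD →ₗ[ℝ] L2)
    (hHDinj : Function.Injective toL2d)
    (hnorm : ∀ w : H1, ‖w‖ ^ 2 = ‖ι w‖ ^ 2 + ‖grad w‖ ^ 2)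
    (hGreen : ∀ (q : HD) (w : H1), tr w = 0 →
        ⟪toL2d q, grad w⟫_ℝ + ⟪dvg q, ι w⟫_ℝ = 0)
    (hHD : ∀ (σ : L2d) (g : L2),
        (∀ w : H1, tr w = 0 → ⟪σ, grad w⟫_ℝ + ⟪g, ι w⟫_ℝ = 0) →
        ∃ q : HD, toL2d q = σ ∧ dvg q = g)
    (what : Htr) (hext : ∃ u0 : H1, tr u0 = what) :
    (∃! p : H1 × HD,
        dvg p.2 + (ε ^ (-(1:ℝ)/2)) • ι p.1 = 0 ∧
        toL2d p.2 + grad p.1 = 0 ∧ tr p.1 = what) ∧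
    (∀ p : H1 × HD,
        dvg p.2 + (ε ^ (-(1:ℝ)/2)) • ι p.1 = 0 →
        toL2d p.2 + grad p.1 = 0 → tr p.1 = what →
        ‖toL2d p.2‖ ^ 2 + ε ^ ((1:ℝ)/2) * ‖dvg p.2‖ ^ 2
            = ‖grad p.1‖ ^ 2 + ε ^ (-(1:ℝ)/2) * ‖ι p.1‖ ^ 2 ∧
        ‖grad p.1‖ ^ 2 + ε ^ (-(1:ℝ)/2) * ‖ι p.1‖ ^ 2
            ≤ ε⁻¹ * sInf {r : ℝ | ∃ u : H1, tr u = what ∧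
                r = ‖ι u‖ ^ 2 + ε * ‖grad u‖ ^ 2}) := by
  set c := ε ^ (-(1:ℝ)/2)
  have hB : IsCoercive (weightedDirichletForm ι grad c) :=
    isCoercive_weightedDirichletForm (Real.rpow_pos_of_pos hε _) hnorm
  have hweak : ∀ p : H1 × HD, dvg p.2 + c • ι p.1 = 0 → toL2d p.2 + grad p.1 = 0 →
      ∀ v, tr v = 0 → weightedDirichletForm ι grad c p.1 v = 0 := fun p h1 h2 v hv => by
    rw [weightedDirichletForm_apply_eq_neg h2 h1, hGreen p.2 v hv, neg_zero]
  obtain ⟨u₀, rfl⟩ := hext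
  obtain ⟨u, htr, horth⟩ := hB.exists_map_eq_forall_ker tr u₀
  obtain ⟨q, hq_flux, hq_div⟩ := hHD (-grad u) (-(c • ι u)) fun v hv => by
    rw [← neg_eq_zero, ← weightedDirichletForm_apply_eq_neg (neg_add_cancel _)
      (neg_add_cancel _), horth v hv]
  refine ⟨⟨(u, q), ⟨by simp [hq_div], by simp [hq_flux], htr⟩, ?_⟩, ?_⟩
  · rintro ⟨w, μ⟩ ⟨h1, h2, h3⟩
    obtain rfl : w = u := hB.eq_of_forall_ker (hweak (w, μ) h1 h2) horth (h3.trans htr.symm)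
    exact Prod.ext rfl (hHDinj (by rw [hq_flux, eq_neg_of_add_eq_zero_left h2]))
  · intro p h1 h2 h3
    refine ⟨?_, ?_⟩
    · rw [rpow_half_mul_norm_sq_eq_of_add_smul_eq_zero hε h1, eq_neg_of_add_eq_zero_left h2,
        norm_neg]
    · have hbound := weightedDirichletForm_self_le_inv_mul_sInf hε hε1 (hweak p h1 h2)
      rwa [weightedDirichletForm_self, h3] at hbound

/-- Lemma 4.7 (robust stability of the singularly perturbed adjoint problem):
in an abstract model of the Sobolev setting on a bounded Lipschitz domain
`Ω ⊆ ℝᵈ` with `0 < ε ≤ 1`, the system `div λ + ε^{-1/2} w = 0`,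
`λ + ∇w = 0` in `Ω`, `w|_Γ = ŵ` has a unique solution
`(w, λ) ∈ H¹(Ω) × H(div,Ω)`, and
`‖λ‖² + ε^{1/2}‖div λ‖² = ‖∇w‖² + ε^{-1/2}‖w‖² ≤ ε^{-1}‖ŵ‖²_{H^{1/2}(Γ)}`,
where `‖ŵ‖²_{H^{1/2}(Γ)} = inf{‖u‖² + ε‖∇u‖² : u|_Γ = ŵ}`. -/
theorem sp_adjoint_problem_stability
    {H1 HD L2 L2d Htr : Type*}
    [NormedAddCommGroup H1] [InnerProductSpace ℝ H1] [CompleteSpace H1]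
    [AddCommGroup HD] [Module ℝ HD]
    [NormedAddCommGroup L2] [InnerProductSpace ℝ L2]
    [NormedAddCommGroup L2d] [InnerProductSpace ℝ L2d]
    [NormedAddCommGroup Htr] [NormedSpace ℝ Htr]
    (ε : ℝ) (hε : 0 < ε) (hε1 : ε ≤ 1)
    (ι : H1 →L[ℝ] L2) (grad : H1 →L[ℝ] L2d) (tr : H1 →L[ℝ] Htr)
    (toL2d : HD →ₗ[ℝ] L2d) (dvg : HD →ₗ[ℝ] L2)
    (hι : Function.Injective ι) (hHDinj : Function.Injective toL2d)
    (hnorm : ∀ w : H1, ‖w‖ ^ 2 = ‖ι w‖ ^ 2 + ‖grad w‖ ^ 2)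
    (hGreen : ∀ (q : HD) (w : H1), tr w = 0 →
        ⟪toL2d q, grad w⟫_ℝ + ⟪dvg q, ι w⟫_ℝ = 0)
    (hHD : ∀ (σ : L2d) (g : L2),
        (∀ w : H1, tr w = 0 → ⟪σ, grad w⟫_ℝ + ⟪g, ι w⟫_ℝ = 0) →
        ∃ q : HD, toL2d q = σ ∧ dvg q = g)
    (what : Htr) (hext : ∃ u0 : H1, tr u0 = what) :
    (∃! p : H1 × HD,
        dvg p.2 + (ε ^ (-(1:ℝ)/2)) • ι p.1 = 0 ∧
        toL2d p.2 + grad p.1 = 0 ∧ tr p.1 = what) ∧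
    (∀ p : H1 × HD,
        dvg p.2 + (ε ^ (-(1:ℝ)/2)) • ι p.1 = 0 →
        toL2d p.2 + grad p.1 = 0 → tr p.1 = what →
        ‖toL2d p.2‖ ^ 2 + ε ^ ((1:ℝ)/2) * ‖dvg p.2‖ ^ 2
            = ‖grad p.1‖ ^ 2 + ε ^ (-(1:ℝ)/2) * ‖ι p.1‖ ^ 2 ∧
        ‖grad p.1‖ ^ 2 + ε ^ (-(1:ℝ)/2) * ‖ι p.1‖ ^ 2
            ≤ ε⁻¹ * sInf {r : ℝ | ∃ u : H1, tr u = what ∧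
                r = ‖ι u‖ ^ 2 + ε * ‖grad u‖ ^ 2}) :=
  sp_adjoint_problem_stability_general ε hε hε1 ι grad tr toL2d dvg hHDinj hnorm hGreen hHD what
    hext
end

section
/- Let Ω ⊆ ℝᵈ be a bounded Lipschitz domain, 0 < ε ≤ 1, and v ∈ H¹₀(Ω) with Δv ∈ H¹(Ω) satisfy the variational identity ε^{3/2}(Δv, Δz) + (ε^{1/2}+ε)(∇v, ∇z) + (v, z) = −ε^{1/4}⟨∇z·n, v̂⟩_Γ for all z ∈ H¹(Ω) with Δz ∈ L²(Ω) and z|_Γ = 0, where v̂ ∈ H^{1/2}(Γ). Then ε^{3/2}‖Δv‖² + (ε^{1/2}+ε)‖∇v‖² + ‖v‖² ≤ ε^{−1}‖v̂‖²_{H^{1/2}(Γ)}, with ‖v̂‖²_{H^{1/2}(Γ)} = inf{‖u‖² + ε‖∇u‖² : u ∈ H¹(Ω), u|_Γ = v̂}. -/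
open scoped InnerProductSpace

set_option maxHeartbeats 1000000 in
/-- Estimate (eq:Hm12estimate:estV1) from the proof of Lemma 4.8: if
`v ∈ H¹₀(Ω)` with `Δv ∈ H¹(Ω)` (weak Laplacian `lv`) satisfies the variational
identity
`ε^{3/2}(Δv,Δz) + (ε^{1/2}+ε)(∇v,∇z) + (v,z) = −ε^{1/4}⟨∇z·n, v̂⟩_Γ`
for all `z ∈ H¹(Ω)` with `Δz ∈ L²(Ω)` and `z|_Γ = 0` — where the normal-trace
pairing is defined by duality, `⟨∇z·n, v̂⟩ = (Δz,u) + (∇z,∇u)` for any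
extension `u` of `v̂` — then
`ε^{3/2}‖Δv‖² + (ε^{1/2}+ε)‖∇v‖² + ‖v‖² ≤ ε^{-1}‖v̂‖²_{H^{1/2}(Γ)}`,
with `‖v̂‖²_{H^{1/2}(Γ)} = inf{‖u‖² + ε‖∇u‖² : u|_Γ = v̂}`. -/
theorem sp_dual_problem_estimate_V1
    {H1 L2 L2d Htr : Type*}
    [NormedAddCommGroup H1] [NormedSpace ℝ H1]
    [NormedAddCommGroup L2] [InnerProductSpace ℝ L2]
    [NormedAddCommGroup L2d] [InnerProductSpace ℝ L2d]
    [NormedAddCommGroup Htr] [NormedSpace ℝ Htr]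
    (ε : ℝ) (hε : 0 < ε) (hε1 : ε ≤ 1)
    (ι : H1 →ₗ[ℝ] L2) (grad : H1 →ₗ[ℝ] L2d) (tr : H1 →ₗ[ℝ] Htr)
    (v : H1) (lv : L2) (vhat : Htr)
    (hv0 : tr v = 0)
    -- lv is the weak Laplacian of v:
    (hlap : ∀ w : H1, tr w = 0 → ⟪lv, ι w⟫_ℝ = -⟪grad v, grad w⟫_ℝ)
    -- Δv ∈ H¹(Ω):
    (hΔH1 : ∃ g : H1, ι g = lv)
    -- v̂ ∈ H^{1/2}(Γ), i.e. it has an H¹-extension: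
    (hext : ∃ u : H1, tr u = vhat)
    -- the variational identity:
    (hvar : ∀ (z : H1) (lz : L2),
        (∀ w : H1, tr w = 0 → ⟪lz, ι w⟫_ℝ = -⟪grad z, grad w⟫_ℝ) →
        tr z = 0 → ∀ u : H1, tr u = vhat →
        ε ^ ((3:ℝ)/2) * ⟪lv, lz⟫_ℝ + (ε ^ ((1:ℝ)/2) + ε) * ⟪grad v, grad z⟫_ℝ
            + ⟪ι v, ι z⟫_ℝ
          = -(ε ^ ((1:ℝ)/4)) * (⟪lz, ι u⟫_ℝ + ⟪grad z, grad u⟫_ℝ)) :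
    ε ^ ((3:ℝ)/2) * ‖lv‖ ^ 2 + (ε ^ ((1:ℝ)/2) + ε) * ‖grad v‖ ^ 2 + ‖ι v‖ ^ 2
      ≤ ε⁻¹ * sInf {r : ℝ | ∃ u : H1, tr u = vhat ∧
          r = ‖ι u‖ ^ 2 + ε * ‖grad u‖ ^ 2} := by
  set a : ℝ := ε ^ ((1:ℝ)/4) with ha
  have ha0 : 0 < a := Real.rpow_pos_of_pos hε _
  have hae : a ^ 4 = ε := by
    rw [ha, ← Real.rpow_natCast (ε ^ ((1:ℝ)/4)) 4, ← Real.rpow_mul hε.le]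
    norm_num
  have hhalf : ε ^ ((1:ℝ)/2) = a ^ 2 := by
    rw [ha, ← Real.rpow_natCast (ε ^ ((1:ℝ)/4)) 2, ← Real.rpow_mul hε.le]
    norm_num
  have h32 : ε ^ ((3:ℝ)/2) = a ^ 6 := by
    rw [ha, ← Real.rpow_natCast (ε ^ ((1:ℝ)/4)) 6, ← Real.rpow_mul hε.le]
    norm_num
  set A : ℝ := ‖lv‖
  set B : ℝ := ‖grad v‖
  set C : ℝ := ‖ι v‖
  set S : ℝ := ε ^ ((3:ℝ)/2) * A ^ 2 + (ε ^ ((1:ℝ)/2) + ε) * B ^ 2 + C ^ 2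
    with hSdef
  have key : ∀ u : H1, tr u = vhat → S ≤ ε⁻¹ * (‖ι u‖ ^ 2 + ε * ‖grad u‖ ^ 2) := by
    intro u hu
    have hid := hvar v lv hlap hv0 u hu
    have hinn_lv : ⟪lv, lv⟫_ℝ = A ^ 2 := real_inner_self_eq_norm_sq lv
    have hinn_gv : ⟪grad v, grad v⟫_ℝ = B ^ 2 := real_inner_self_eq_norm_sq _
    have hinn_iv : ⟪ι v, ι v⟫_ℝ = C ^ 2 := real_inner_self_eq_norm_sq _
    rw [hinn_lv, hinn_gv, hinn_iv] at hid
    set U : ℝ := ‖ι u‖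
    set G : ℝ := ‖grad u‖
    have hP : |⟪lv, ι u⟫_ℝ| ≤ A * U := abs_real_inner_le_norm _ _
    have hQ : |⟪grad v, grad u⟫_ℝ| ≤ B * G := abs_real_inner_le_norm _ _
    have hP1 : -(A * U) ≤ ⟪lv, ι u⟫_ℝ := neg_le_of_abs_le hP
    have hQ1 : -(B * G) ≤ ⟪grad v, grad u⟫_ℝ := neg_le_of_abs_le hQ
    -- S = -a (P + Q) ≤ a (A U + B G)
    have hS_le : S ≤ a * (A * U) + a * (B * G) := by
      rw [hSdef, hid]
      nlinarith [ha0.le, hP1, hQ1]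
    -- ε * S ≤ U² + ε G²
    have hmain : ε * S ≤ U ^ 2 + ε * G ^ 2 := by
      have hSlow : a ^ 6 * A ^ 2 + a ^ 2 * B ^ 2 ≤ S := by
        rw [hSdef, h32, hhalf]
        nlinarith [sq_nonneg C, sq_nonneg B, hε.le]
      have h1 : a ^ 4 * S ≤ a ^ 4 * (a * (A * U) + a * (B * G)) :=
        mul_le_mul_of_nonneg_left hS_le (pow_nonneg ha0.le 4)
      have h2 : a ^ 4 * (a ^ 6 * A ^ 2 + a ^ 2 * B ^ 2) ≤ a ^ 4 * S :=
        mul_le_mul_of_nonneg_left hSlow (pow_nonneg ha0.le 4)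
      have e1 : (0:ℝ) ≤ (a ^ 5 * A - U) ^ 2 := sq_nonneg _
      have e2 : (0:ℝ) ≤ (a ^ 3 * B - a ^ 2 * G) ^ 2 := sq_nonneg _
      rw [← hae]
      ring_nf at h1 h2 e1 e2 ⊢
      linarith [h1, h2, e1, e2]
    calc S ≤ (U ^ 2 + ε * G ^ 2) / ε := by
            rw [le_div_iff₀ hε]; linarith [hmain]
      _ = ε⁻¹ * (U ^ 2 + ε * G ^ 2) := by rw [div_eq_inv_mul]
  obtain ⟨u0, hu0⟩ := hext
  have hne : ({r : ℝ | ∃ u : H1, tr u = vhat ∧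
      r = ‖ι u‖ ^ 2 + ε * ‖grad u‖ ^ 2}).Nonempty :=
    ⟨_, u0, hu0, rfl⟩
  have hbdd : ∀ r ∈ {r : ℝ | ∃ u : H1, tr u = vhat ∧
      r = ‖ι u‖ ^ 2 + ε * ‖grad u‖ ^ 2}, ε * S ≤ r := by
    rintro r ⟨u, hu, rfl⟩
    have := key u hu
    have h2 : ε * S ≤ ε * (ε⁻¹ * (‖ι u‖ ^ 2 + ε * ‖grad u‖ ^ 2)) :=
      mul_le_mul_of_nonneg_left this hε.le
    rwa [← mul_assoc, mul_inv_cancel₀ hε.ne', one_mul] at h2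
  have hinf : ε * S ≤ sInf {r : ℝ | ∃ u : H1, tr u = vhat ∧
      r = ‖ι u‖ ^ 2 + ε * ‖grad u‖ ^ 2} := le_csInf hne hbdd
  calc S ≤ ε⁻¹ * (ε * S) := by
        rw [← mul_assoc, inv_mul_cancel₀ hε.ne', one_mul]
    _ ≤ _ := mul_le_mul_of_nonneg_left hinf (inv_nonneg.2 hε.le)
end

section
/- Under the hypotheses of the previous statement (v ∈ H¹₀(Ω) solving the variational identity with boundary datum v̂ and 0 < ε ≤ 1), the Young-inequality refinement with parameter δ = 1/2 yields the stronger bound ε‖∇v‖² + ‖v‖² ≤ (1/4) ε^{−1} ‖v̂‖²_{H^{1/2}(Γ)}. -/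
/-!
Testing the variational identity with `z = v` itself (legitimate since `v` vanishes on the
boundary and `lv` is its weak Laplacian) turns it into an energy identity whose right-hand side
is the boundary pairing `-ε^{1/4} ((Δv, u) + (∇v, ∇u))` for an arbitrary extension `u` of `v̂`.
Cauchy–Schwarz and Young's inequality with parameter `δ` bound this pairing by
`δ⁻¹/2 (ε^{3/2}‖Δv‖² + ε^{1/2}‖∇v‖²) + δ/2 ε⁻¹ (‖u‖² + ε‖∇u‖²)`; for `δ = 1/2` the first
group cancels against the left-hand side, and taking the infimum over `u` gives the estimate.
-/

open scoped InnerProductSpace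

section BoundaryPairing

variable {E F : Type*} [NormedAddCommGroup E] [InnerProductSpace ℝ E]
  [NormedAddCommGroup F] [InnerProductSpace ℝ F]

theorem neg_rpow_quarter_mul_inner_add_inner_le {ε δ : ℝ} (hε : 0 < ε) (hδ : 0 < δ)
    (l y : E) (g w : F) :
    -(ε ^ ((1:ℝ)/4)) * (⟪l, y⟫_ℝ + ⟪g, w⟫_ℝ)
      ≤ δ⁻¹ / 2 * (ε ^ ((3:ℝ)/2) * ‖l‖ ^ 2 + ε ^ ((1:ℝ)/2) * ‖g‖ ^ 2)
        + δ / 2 * ε⁻¹ * (‖y‖ ^ 2 + ε * ‖w‖ ^ 2) := by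
  set s := ε ^ ((1:ℝ)/4) with hs_def
  have hs : 0 < s := Real.rpow_pos_of_pos hε _
  have hε4 : ε = s ^ 4 := by
    rw [hs_def, ← Real.rpow_natCast, ← Real.rpow_mul hε.le]; norm_num
  have hε2 : ε ^ ((1:ℝ)/2) = s ^ 2 := by
    rw [hs_def, ← Real.rpow_natCast, ← Real.rpow_mul hε.le]; norm_num
  have hε6 : ε ^ ((3:ℝ)/2) = s ^ 6 := by
    rw [hs_def, ← Real.rpow_natCast, ← Real.rpow_mul hε.le]; norm_num
  have young (a b : ℝ) : a * b ≤ δ⁻¹ / 2 * a ^ 2 + δ / 2 * b ^ 2 := by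
    have := two_mul_le_add_mul_sq (a := a) (b := b) (inv_pos.2 hδ)
    rw [inv_inv] at this
    linarith
  have cauchy_schwarz : -(⟪l, y⟫_ℝ + ⟪g, w⟫_ℝ) ≤ ‖l‖ * ‖y‖ + ‖g‖ * ‖w‖ := by
    have hly := neg_le_of_abs_le (abs_real_inner_le_norm l y)
    have hgw := neg_le_of_abs_le (abs_real_inner_le_norm g w)
    linarith
  rw [hε2, hε6, hε4]
  calc -s * (⟪l, y⟫_ℝ + ⟪g, w⟫_ℝ)
      ≤ s * (‖l‖ * ‖y‖ + ‖g‖ * ‖w‖) := by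
        rw [neg_mul, ← mul_neg]; exact mul_le_mul_of_nonneg_left cauchy_schwarz hs.le
    _ = (s ^ 3 * ‖l‖) * (‖y‖ / s ^ 2) + (s * ‖g‖) * ‖w‖ := by field_simp
    _ ≤ (δ⁻¹ / 2 * (s ^ 3 * ‖l‖) ^ 2 + δ / 2 * (‖y‖ / s ^ 2) ^ 2)
          + (δ⁻¹ / 2 * (s * ‖g‖) ^ 2 + δ / 2 * ‖w‖ ^ 2) := add_le_add (young _ _) (young _ _)
    _ = δ⁻¹ / 2 * (s ^ 6 * ‖l‖ ^ 2 + s ^ 2 * ‖g‖ ^ 2)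
          + δ / 2 * (s ^ 4)⁻¹ * (‖y‖ ^ 2 + s ^ 4 * ‖w‖ ^ 2) := by field_simp; ring

theorem energy_le_of_boundary_identity {ε a : ℝ} (hε : 0 < ε) {l y : E} {g w : F}
    (h : ε ^ ((3:ℝ)/2) * ‖l‖ ^ 2 + (ε ^ ((1:ℝ)/2) + ε) * ‖g‖ ^ 2 + a
      = -(ε ^ ((1:ℝ)/4)) * (⟪l, y⟫_ℝ + ⟪g, w⟫_ℝ)) :
    ε * ‖g‖ ^ 2 + a ≤ 1 / 4 * ε⁻¹ * (‖y‖ ^ 2 + ε * ‖w‖ ^ 2) := by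
  have young := neg_rpow_quarter_mul_inner_add_inner_le hε one_half_pos l y g w
  norm_num at young
  linarith

end BoundaryPairing

theorem le_mul_csInf {S : Set ℝ} (hS : S.Nonempty) {a c : ℝ} (hc : 0 < c)
    (h : ∀ r ∈ S, a ≤ c * r) : a ≤ c * sInf S := by
  rw [← div_le_iff₀' hc]
  exact le_csInf hS fun r hr => (div_le_iff₀' hc).2 (h r hr)

theorem sp_dual_problem_estimate_V2_general
    {H1 L2 L2d Htr : Type*}
    [NormedAddCommGroup H1] [NormedSpace ℝ H1]
    [NormedAddCommGroup L2] [InnerProductSpace ℝ L2]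
    [NormedAddCommGroup L2d] [InnerProductSpace ℝ L2d]
    [NormedAddCommGroup Htr] [NormedSpace ℝ Htr]
    (ε : ℝ) (hε : 0 < ε)
    (ι : H1 →ₗ[ℝ] L2) (grad : H1 →ₗ[ℝ] L2d) (tr : H1 →ₗ[ℝ] Htr)
    (v : H1) (lv : L2) (vhat : Htr)
    (hv0 : tr v = 0)
    -- lv is the weak Laplacian of v:
    (hlap : ∀ w : H1, tr w = 0 → ⟪lv, ι w⟫_ℝ = -⟪grad v, grad w⟫_ℝ)
    -- v̂ ∈ H^{1/2}(Γ), i.e. it has an H¹-extension: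
    (hext : ∃ u : H1, tr u = vhat)
    -- the variational identity:
    (hvar : ∀ (z : H1) (lz : L2),
        (∀ w : H1, tr w = 0 → ⟪lz, ι w⟫_ℝ = -⟪grad z, grad w⟫_ℝ) →
        tr z = 0 → ∀ u : H1, tr u = vhat →
        ε ^ ((3:ℝ)/2) * ⟪lv, lz⟫_ℝ + (ε ^ ((1:ℝ)/2) + ε) * ⟪grad v, grad z⟫_ℝ
            + ⟪ι v, ι z⟫_ℝ
          = -(ε ^ ((1:ℝ)/4)) * (⟪lz, ι u⟫_ℝ + ⟪grad z, grad u⟫_ℝ)) :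
    ε * ‖grad v‖ ^ 2 + ‖ι v‖ ^ 2
      ≤ (1/4) * ε⁻¹ * sInf {r : ℝ | ∃ u : H1, tr u = vhat ∧
          r = ‖ι u‖ ^ 2 + ε * ‖grad u‖ ^ 2} := by
  obtain ⟨u₀, hu₀⟩ := hext
  refine le_mul_csInf ?_ (by positivity) ?_
  · exact ⟨_, u₀, hu₀, rfl⟩
  rintro _ ⟨u, hu, rfl⟩
  have energy_identity := hvar v lv hlap hv0 u hu
  simp only [real_inner_self_eq_norm_sq] at energy_identity
  exact energy_le_of_boundary_identity hε energy_identity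

/-- Estimate (eq:Hm12estimate:estV2) from the proof of Lemma 4.8: if
`v ∈ H¹₀(Ω)` with `Δv ∈ H¹(Ω)` (weak Laplacian `lv`) satisfies the variational
identity
`ε^{3/2}(Δv,Δz) + (ε^{1/2}+ε)(∇v,∇z) + (v,z) = −ε^{1/4}⟨∇z·n, v̂⟩_Γ`
for all `z ∈ H¹(Ω)` with `Δz ∈ L²(Ω)` and `z|_Γ = 0` — where the normal-trace
pairing is defined by duality, `⟨∇z·n, v̂⟩ = (Δz,u) + (∇z,∇u)` for any
extension `u` of `v̂` — then the Young-inequality refinement with parameter δ = 1/2 yields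
`ε‖∇v‖² + ‖v‖² ≤ (1/4)ε^{-1}‖v̂‖²_{H^{1/2}(Γ)}`,
with `‖v̂‖²_{H^{1/2}(Γ)} = inf{‖u‖² + ε‖∇u‖² : u|_Γ = v̂}`. -/
theorem sp_dual_problem_estimate_V2
    {H1 L2 L2d Htr : Type*}
    [NormedAddCommGroup H1] [NormedSpace ℝ H1]
    [NormedAddCommGroup L2] [InnerProductSpace ℝ L2]
    [NormedAddCommGroup L2d] [InnerProductSpace ℝ L2d]
    [NormedAddCommGroup Htr] [NormedSpace ℝ Htr]
    (ε : ℝ) (hε : 0 < ε) (hε1 : ε ≤ 1)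
    (ι : H1 →ₗ[ℝ] L2) (grad : H1 →ₗ[ℝ] L2d) (tr : H1 →ₗ[ℝ] Htr)
    (v : H1) (lv : L2) (vhat : Htr)
    (hv0 : tr v = 0)
    -- lv is the weak Laplacian of v:
    (hlap : ∀ w : H1, tr w = 0 → ⟪lv, ι w⟫_ℝ = -⟪grad v, grad w⟫_ℝ)
    -- Δv ∈ H¹(Ω):
    (hΔH1 : ∃ g : H1, ι g = lv)
    -- v̂ ∈ H^{1/2}(Γ), i.e. it has an H¹-extension:
    (hext : ∃ u : H1, tr u = vhat)
    -- the variational identity: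
    (hvar : ∀ (z : H1) (lz : L2),
        (∀ w : H1, tr w = 0 → ⟪lz, ι w⟫_ℝ = -⟪grad z, grad w⟫_ℝ) →
        tr z = 0 → ∀ u : H1, tr u = vhat →
        ε ^ ((3:ℝ)/2) * ⟪lv, lz⟫_ℝ + (ε ^ ((1:ℝ)/2) + ε) * ⟪grad v, grad z⟫_ℝ
            + ⟪ι v, ι z⟫_ℝ
          = -(ε ^ ((1:ℝ)/4)) * (⟪lz, ι u⟫_ℝ + ⟪grad z, grad u⟫_ℝ)) :
    ε * ‖grad v‖ ^ 2 + ‖ι v‖ ^ 2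
      ≤ (1/4) * ε⁻¹ * sInf {r : ℝ | ∃ u : H1, tr u = vhat ∧
          r = ‖ι u‖ ^ 2 + ε * ‖grad u‖ ^ 2} :=
  sp_dual_problem_estimate_V2_general ε hε ι grad tr v lv vhat hv0 hlap hext hvar
end
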